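/- arXiv:1902.07174 — 8 statements merged into one kernel-verified Lean document; each statement's English description precedes it below -/
import Mathlib

section
/- Let (X, λ) be a σ-finite measure space, let μ and ν be finite signed measures on X whose negative parts μ⁻ and ν⁻ are absolutely continuous with respect to λ, and let t ∈ [0,1]. Then the negative part of the signed measure (1−t)μ + tν is absolutely continuous with respect to λ, and Φ((1−t)μ + tν) ≤ (1−t)Φ(μ) + tΦ(ν), i.e. ∫_X exp(−d((1−t)μ+tν)/dλ) dλ ≤ (1−t)∫_X exp(−dμ/dλ) dλ + t∫_X exp(−dν/dλ) dλ, with values in [0,+∞]. -/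
/-!
The negative part of a signed measure is absolutely continuous with respect to `λ` exactly when
the measure is nonnegative on `λ`-null sets, a condition preserved by nonnegative combinations.
Since the Radon–Nikodym derivative is linear up to `λ`-null sets, the inequality is the pointwise
convexity of `exp`, integrated against `λ`.
-/

open MeasureTheory

namespace MeasureTheory.SignedMeasure

variable {X : Type*} [MeasurableSpace X] {lam : Measure X}

theorem negPart_absolutelyContinuous_iff (ρ : SignedMeasure X) :
    ρ.toJordanDecomposition.negPart ≪ lam ↔
      ∀ A, MeasurableSet A → lam A = 0 → 0 ≤ ρ A := by
  constructor
  · intro hρ A hA hA0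
    rw [ρ.apply_eq_posPart_real_sub_negPart_real hA, measureReal_def, measureReal_def, hρ hA0]
    simp
  · intro hρ
    refine Measure.AbsolutelyContinuous.mk fun S hS hS0 => ?_
    obtain ⟨i, hi, -, hi_neg, -, hneg⟩ := ρ.toJordanDecomposition_spec
    rw [hneg, toMeasureOfLEZero_apply _ hi_neg hi.compl hS]
    have hA : MeasurableSet (iᶜ ∩ S) := hi.compl.inter hS
    have hle : ρ (iᶜ ∩ S) ≤ 0 :=
      (VectorMeasure.restrict_le_restrict_iff _ _ hi.compl).1 hi_neg hA Set.inter_subset_left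
    have hge : 0 ≤ ρ (iᶜ ∩ S) := hρ _ hA (measure_mono_null Set.inter_subset_right hS0)
    simp [le_antisymm hle hge]

theorem negPart_absolutelyContinuous_smul_add_smul {μ ν : SignedMeasure X} {a b : ℝ}
    (ha : 0 ≤ a) (hb : 0 ≤ b) (hμ : μ.toJordanDecomposition.negPart ≪ lam)
    (hν : ν.toJordanDecomposition.negPart ≪ lam) :
    (a • μ + b • ν).toJordanDecomposition.negPart ≪ lam := by
  rw [negPart_absolutelyContinuous_iff] at hμ hν ⊢
  intro A hA hA0
  have hμA := hμ A hA hA0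
  have hνA := hν A hA hA0
  simp only [FunLike.coe_add, FunLike.coe_smul, Pi.add_apply, Pi.smul_apply,
    smul_eq_mul]
  positivity

theorem rnDeriv_smul_add_smul [SigmaFinite lam] (μ ν : SignedMeasure X) (a b : ℝ) :
    (a • μ + b • ν).rnDeriv lam =ᵐ[lam] fun x => a * μ.rnDeriv lam x + b * ν.rnDeriv lam x := by
  filter_upwards [rnDeriv_add (a • μ) (b • ν) lam, rnDeriv_smul μ lam a,
    rnDeriv_smul ν lam b] with x hadd hμ hν
  simp only [hadd, Pi.add_apply, hμ, hν, Pi.smul_apply, smul_eq_mul]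

end MeasureTheory.SignedMeasure

theorem lintegral_exp_neg_convex_combination_le {X : Type*} [MeasurableSpace X]
    (lam : Measure X) {f g : X → ℝ} (hf : Measurable f) {a b : ℝ}
    (ha : 0 ≤ a) (hb : 0 ≤ b) (hab : a + b = 1) :
    ∫⁻ x, ENNReal.ofReal (Real.exp (-(a * f x + b * g x))) ∂lam ≤
      ENNReal.ofReal a * ∫⁻ x, ENNReal.ofReal (Real.exp (-f x)) ∂lam +
        ENNReal.ofReal b * ∫⁻ x, ENNReal.ofReal (Real.exp (-g x)) ∂lam := by
  have hpointwise : ∀ x, ENNReal.ofReal (Real.exp (-(a * f x + b * g x))) ≤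
      ENNReal.ofReal a * ENNReal.ofReal (Real.exp (-f x)) +
        ENNReal.ofReal b * ENNReal.ofReal (Real.exp (-g x)) := by
    intro x
    rw [← ENNReal.ofReal_mul ha, ← ENNReal.ofReal_mul hb,
      ← ENNReal.ofReal_add (by positivity) (by positivity)]
    refine ENNReal.ofReal_le_ofReal ?_
    have := convexOn_exp.2 (Set.mem_univ (-f x)) (Set.mem_univ (-g x)) ha hb hab
    rw [neg_add]
    simpa only [smul_eq_mul, mul_neg] using this
  calc _ ≤ ∫⁻ x, ENNReal.ofReal a * ENNReal.ofReal (Real.exp (-f x)) +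
        ENNReal.ofReal b * ENNReal.ofReal (Real.exp (-g x)) ∂lam := lintegral_mono hpointwise
    _ = _ := by
      rw [lintegral_add_left (by fun_prop), lintegral_const_mul' _ _ ENNReal.ofReal_ne_top,
        lintegral_const_mul' _ _ ENNReal.ofReal_ne_top]

/-- Convexity of the functional `Φ(μ) = ∫ exp(−dμ/dλ) dλ`: if the negative parts of the
finite signed measures `μ` and `ν` are absolutely continuous with respect to `λ`, then so is
the negative part of `(1−t)μ + tν` for `t ∈ [0,1]`, and
`Φ((1−t)μ + tν) ≤ (1−t)Φ(μ) + tΦ(ν)` (with values in `[0,+∞]`). -/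
theorem stmt1 {X : Type*} [MeasurableSpace X] (lam : Measure X) [SigmaFinite lam]
    (μ ν : SignedMeasure X) (t : ℝ) (ht0 : 0 ≤ t) (ht1 : t ≤ 1)
    (hμ : μ.toJordanDecomposition.negPart ≪ lam)
    (hν : ν.toJordanDecomposition.negPart ≪ lam) :
    ((1 - t) • μ + t • ν).toJordanDecomposition.negPart ≪ lam ∧
    (∫⁻ x, ENNReal.ofReal (Real.exp (-(((1 - t) • μ + t • ν).rnDeriv lam x))) ∂lam) ≤
      ENNReal.ofReal (1 - t) *
          (∫⁻ x, ENNReal.ofReal (Real.exp (-(μ.rnDeriv lam x))) ∂lam) +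
        ENNReal.ofReal t * ∫⁻ x, ENNReal.ofReal (Real.exp (-(ν.rnDeriv lam x))) ∂lam := by
  have h1t : 0 ≤ 1 - t := sub_nonneg.2 ht1
  refine ⟨SignedMeasure.negPart_absolutelyContinuous_smul_add_smul h1t ht0 hμ hν, ?_⟩
  calc _ = ∫⁻ x, ENNReal.ofReal
          (Real.exp (-((1 - t) * μ.rnDeriv lam x + t * ν.rnDeriv lam x))) ∂lam := by
        refine lintegral_congr_ae ?_
        filter_upwards [SignedMeasure.rnDeriv_smul_add_smul μ ν (1 - t) t] with x hx
        rw [hx]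
    _ ≤ _ := lintegral_exp_neg_convex_combination_le lam (μ.measurable_rnDeriv lam) h1t ht0 (sub_add_cancel 1 t)
end

section
/- Let λ be a finite measure on a measurable space X and let μ be a finite signed measure on X such that μ(X) = 0 and the negative part μ⁻ of the Jordan decomposition of μ is absolutely continuous with respect to λ. Then the total variation measure |μ| = μ⁺ + μ⁻ satisfies |μ|(X) = 2 μ⁺(X) = 2 μ⁻(X) ≤ 2 ∫_X exp(−dμ/dλ) dλ. -/
open MeasureTheory

/-!
The identities come from `0 = μ(X) = μ⁺(X) - μ⁻(X)`. For the inequality, `μ⁺ ⟂ μ⁻` forces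
`λ`-a.e. one of the densities `dμ⁺/dλ`, `dμ⁻/dλ` to vanish, so `exp(-dμ/dλ)` dominates
`dμ⁻/dλ` pointwise (where `dμ⁺/dλ = 0` this is `t ≤ exp t`); since `μ⁻ ≪ λ`, integrating
`dμ⁻/dλ` recovers `μ⁻(X)`.
-/

lemma ENNReal.le_ofReal_exp_toReal {a : ENNReal} (ha : a ≠ ⊤) :
    a ≤ ENNReal.ofReal (Real.exp a.toReal) := by
  calc a = ENNReal.ofReal a.toReal := (ENNReal.ofReal_toReal ha).symm
    _ ≤ ENNReal.ofReal (Real.exp a.toReal) :=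
      ENNReal.ofReal_le_ofReal ((le_add_of_nonneg_right zero_le_one).trans (Real.add_one_le_exp _))

namespace MeasureTheory

variable {X : Type*} [MeasurableSpace X]

lemma Measure.ae_restrict_rnDeriv_eq_zero {μ : Measure X} {s : Set X} (hs : μ s = 0)
    (ρ : Measure X) : ∀ᵐ x ∂ρ.restrict s, μ.rnDeriv ρ x = 0 := by
  have h : ∫⁻ x in s, μ.rnDeriv ρ x ∂ρ = 0 :=
    le_antisymm ((Measure.setLIntegral_rnDeriv_le s).trans hs.le) zero_le
  exact (lintegral_eq_zero_iff (Measure.measurable_rnDeriv μ ρ)).mp h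

lemma Measure.MutuallySingular.ae_rnDeriv_eq_zero_or {μ ν : Measure X} (h : μ ⟂ₘ ν)
    (ρ : Measure X) : ∀ᵐ x ∂ρ, μ.rnDeriv ρ x = 0 ∨ ν.rnDeriv ρ x = 0 := by
  obtain ⟨s, hs, hμs, hνs⟩ := h
  refine ae_of_ae_restrict_of_ae_restrict_compl s ?_ ?_
  · filter_upwards [Measure.ae_restrict_rnDeriv_eq_zero hμs ρ] with x hx using Or.inl hx
  · filter_upwards [Measure.ae_restrict_rnDeriv_eq_zero hνs ρ] with x hx using Or.inr hx

namespace SignedMeasure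

lemma posPart_univ_eq_negPart_univ {μ : SignedMeasure X} (h : μ Set.univ = 0) :
    μ.toJordanDecomposition.posPart Set.univ = μ.toJordanDecomposition.negPart Set.univ := by
  rw [μ.apply_eq_posPart_real_sub_negPart_real MeasurableSet.univ, sub_eq_zero] at h
  exact (ENNReal.toReal_eq_toReal_iff' (measure_ne_top _ _) (measure_ne_top _ _)).mp h

lemma totalVariation_univ_eq_two_mul_posPart_univ {μ : SignedMeasure X}
    (h : μ Set.univ = 0) :
    μ.totalVariation Set.univ = 2 * μ.toJordanDecomposition.posPart Set.univ := by
  rw [totalVariation, Measure.add_apply, ← posPart_univ_eq_negPart_univ h, two_mul]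

lemma ae_rnDeriv_negPart_le_ofReal_exp_neg_rnDeriv (μ : SignedMeasure X) (lam : Measure X) :
    ∀ᵐ x ∂lam, μ.toJordanDecomposition.negPart.rnDeriv lam x ≤
      ENNReal.ofReal (Real.exp (-(μ.rnDeriv lam x))) := by
  filter_upwards [μ.toJordanDecomposition.mutuallySingular.ae_rnDeriv_eq_zero_or lam,
    Measure.rnDeriv_lt_top μ.toJordanDecomposition.negPart lam] with x hx hfin
  rcases hx with hpos | hneg
  · rw [rnDeriv_def]
    simpa [hpos] using ENNReal.le_ofReal_exp_toReal hfin.ne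
  · simp [hneg]

lemma negPart_univ_le_lintegral_exp_neg_rnDeriv {μ : SignedMeasure X} {lam : Measure X}
    [SigmaFinite lam] (hac : μ.toJordanDecomposition.negPart ≪ lam) :
    μ.toJordanDecomposition.negPart Set.univ ≤
      ∫⁻ x, ENNReal.ofReal (Real.exp (-(μ.rnDeriv lam x))) ∂lam :=
  calc μ.toJordanDecomposition.negPart Set.univ
      = ∫⁻ x, μ.toJordanDecomposition.negPart.rnDeriv lam x ∂lam :=
        (Measure.lintegral_rnDeriv hac).symm
    _ ≤ _ := lintegral_mono_ae (μ.ae_rnDeriv_negPart_le_ofReal_exp_neg_rnDeriv lam)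

end SignedMeasure

end MeasureTheory

/-- If `μ` is a finite signed measure with `μ(X) = 0` whose negative part is absolutely
continuous with respect to the finite measure `λ`, then the total variation measure
`|μ| = μ⁺ + μ⁻` satisfies `|μ|(X) = 2μ⁺(X) = 2μ⁻(X) ≤ 2∫ exp(−dμ/dλ) dλ`. -/
theorem stmt2 {X : Type*} [MeasurableSpace X] (lam : Measure X) [IsFiniteMeasure lam]
    (μ : SignedMeasure X) (hzero : μ Set.univ = 0)
    (hac : μ.toJordanDecomposition.negPart ≪ lam) :
    μ.totalVariation Set.univ = 2 * μ.toJordanDecomposition.posPart Set.univ ∧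
    2 * μ.toJordanDecomposition.posPart Set.univ =
      2 * μ.toJordanDecomposition.negPart Set.univ ∧
    2 * μ.toJordanDecomposition.negPart Set.univ ≤
      2 * ∫⁻ x, ENNReal.ofReal (Real.exp (-(μ.rnDeriv lam x))) ∂lam :=
  ⟨SignedMeasure.totalVariation_univ_eq_two_mul_posPart_univ hzero,
    by rw [SignedMeasure.posPart_univ_eq_negPart_univ hzero],
    mul_le_mul_right (SignedMeasure.negPart_univ_le_lintegral_exp_neg_rnDeriv hac) 2⟩
end

section
/- Let H be a real Hilbert space, S ⊆ H a set, and F : H → ℝ a function. Assume that for every u ∈ S there exists ε₀ > 0 such that for all ε ∈ (0, ε₀) one has (1−ε)u ∈ S and F((1−ε)u) = F(u). Let h : [0,∞) → H be a differentiable curve such that for every t ≥ 0 and every v ∈ S one has h(t) ∈ S and ⟨h'(t), h(t) − v⟩ ≤ F(v) − F(h(t)). Then ⟨h'(t), h(t)⟩ ≤ 0 for every t ≥ 0, and consequently the function t ↦ ‖h(t)‖² is nonincreasing on [0,∞). -/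
/-!
Testing the evolution variational inequality at `h t` with the competitor `v = (1 - ε) • h t`,
the right-hand side `F v - F (h t)` vanishes by scaling invariance while the left-hand side is
`ε ⟪h' t, h t⟫`; hence `⟪h' t, h t⟫ ≤ 0`. Since `d/dt ‖h t‖² = 2 ⟪h t, h' t⟫`, the mean value
theorem gives monotonicity.
-/

open Set

section

variable {H : Type*} [NormedAddCommGroup H] [InnerProductSpace ℝ H]

theorem inner_nonpos_of_evi_of_smul_invariant {S : Set H} {F : H → ℝ} {u w : H}
    (hscale : ∃ ε > (0 : ℝ), (1 - ε) • u ∈ S ∧ F ((1 - ε) • u) = F u)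
    (hEVI : ∀ v ∈ S, (inner ℝ w (u - v) : ℝ) ≤ F v - F u) :
    (inner ℝ w u : ℝ) ≤ 0 := by
  obtain ⟨ε, hε, hmem, hF⟩ := hscale
  have hsub : u - (1 - ε) • u = ε • u := by rw [sub_smul, one_smul, sub_sub_cancel]
  have h := hEVI _ hmem
  rw [hF, sub_self, hsub, real_inner_smul_right] at h
  exact nonpos_of_mul_nonpos_right h hε

theorem antitoneOn_norm_sq_of_inner_deriv_nonpos {D : Set ℝ} (hD : Convex ℝ D) {h h' : ℝ → H}
    (hd : ∀ t ∈ D, HasDerivWithinAt h (h' t) D t)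
    (hneg : ∀ t ∈ D, (inner ℝ (h' t) (h t) : ℝ) ≤ 0) :
    AntitoneOn (fun t => ‖h t‖ ^ 2) D := by
  have hcont : ContinuousOn (fun t => ‖h t‖ ^ 2) D :=
    (continuous_norm.comp_continuousOn fun t ht => (hd t ht).continuousWithinAt).pow 2
  refine antitoneOn_of_hasDerivWithinAt_nonpos hD hcont
    (fun t ht => ((hd t (interior_subset ht)).mono interior_subset).norm_sq) fun t ht => ?_
  rw [real_inner_comm]
  linarith [hneg t (interior_subset ht)]

end

theorem stmt6_general {H : Type*} [NormedAddCommGroup H] [InnerProductSpace ℝ H]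
    (S : Set H) (F : H → ℝ)
    (hscale : ∀ u ∈ S, ∃ ε₀ > (0 : ℝ), ∀ ε : ℝ, 0 < ε → ε < ε₀ →
      (1 - ε) • u ∈ S ∧ F ((1 - ε) • u) = F u)
    (h h' : ℝ → H)
    (hd : ∀ t, 0 ≤ t → HasDerivWithinAt h (h' t) (Ici 0) t)
    (hS : ∀ t, 0 ≤ t → h t ∈ S)
    (hEVI : ∀ t, 0 ≤ t → ∀ v ∈ S, (inner ℝ (h' t) (h t - v) : ℝ) ≤ F v - F (h t)) :
    (∀ t, 0 ≤ t → (inner ℝ (h' t) (h t) : ℝ) ≤ 0) ∧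
      AntitoneOn (fun t => ‖h t‖ ^ 2) (Ici 0) := by
  have hdecay : ∀ t, 0 ≤ t → (inner ℝ (h' t) (h t) : ℝ) ≤ 0 := by
    intro t ht
    obtain ⟨ε₀, hε₀, hsc⟩ := hscale (h t) (hS t ht)
    exact inner_nonpos_of_evi_of_smul_invariant
      ⟨ε₀ / 2, half_pos hε₀, hsc _ (half_pos hε₀) (half_lt_self hε₀)⟩ (hEVI t ht)
  exact ⟨hdecay, antitoneOn_norm_sq_of_inner_deriv_nonpos (convex_Ici 0) hd hdecay⟩

/-- Decay estimate for EVI solutions: if the domain `S` and the functional `F` are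
invariant under the scalings `u ↦ (1−ε)u` for small `ε > 0`, then any differentiable EVI
solution `h` of the gradient flow of `F` satisfies `⟨h'(t), h(t)⟩ ≤ 0` for every `t ≥ 0`,
and consequently `t ↦ ‖h(t)‖²` is nonincreasing on `[0,∞)`. -/
theorem stmt6 {H : Type*} [NormedAddCommGroup H] [InnerProductSpace ℝ H] [CompleteSpace H]
    (S : Set H) (F : H → ℝ)
    (hscale : ∀ u ∈ S, ∃ ε₀ > (0 : ℝ), ∀ ε : ℝ, 0 < ε → ε < ε₀ →
      (1 - ε) • u ∈ S ∧ F ((1 - ε) • u) = F u)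
    (h h' : ℝ → H)
    (hd : ∀ t, 0 ≤ t → HasDerivWithinAt h (h' t) (Ici 0) t)
    (hS : ∀ t, 0 ≤ t → h t ∈ S)
    (hEVI : ∀ t, 0 ≤ t → ∀ v ∈ S, (inner ℝ (h' t) (h t - v) : ℝ) ≤ F v - F (h t)) :
    (∀ t, 0 ≤ t → (inner ℝ (h' t) (h t) : ℝ) ≤ 0) ∧
      AntitoneOn (fun t => ‖h t‖ ^ 2) (Ici 0) :=
  stmt6_general S F hscale h h' hd hS hEVI
end

section
/- Let L > 0, V ≥ 0, and let u : ℝ → ℝ be measurable with pointwise total variation of u over the interval [0, L] at most V (i.e. eVariationOn u [0,L] ≤ V), and suppose ∫_{(0,L]} exp(u(x)) dx = 1. Then for every x ∈ [0, L] one has e^{−V}/L ≤ exp(u(x)) ≤ e^{V}/L. -/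
/-!
Bounded variation makes `u` oscillate by at most `V` on `[0, L]`, so for fixed `x` the
integrand `exp ∘ u` is squeezed between `exp (u x - V)` and `exp (u x + V)` on `(0, L]`.
Integrating against the normalisation `∫ exp u = 1` gives
`L exp (u x - V) ≤ 1 ≤ L exp (u x + V)`, which rearranges to the two bounds.
-/

open Set MeasureTheory

lemma abs_sub_le_of_eVariationOn_le {α : Type*} [LinearOrder α] {f : α → ℝ} {s : Set α}
    {V : ℝ} (hV : 0 ≤ V) (hf : eVariationOn f s ≤ ENNReal.ofReal V) {x y : α}
    (hx : x ∈ s) (hy : y ∈ s) : |f x - f y| ≤ V := by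
  have h := (eVariationOn.edist_le f hx hy).trans hf
  rwa [edist_dist, ENNReal.ofReal_le_ofReal_iff hV, Real.dist_eq] at h

lemma setIntegral_le_of_le_const_real {X : Type*} [MeasurableSpace X] {μ : Measure X}
    {s : Set X} {f : X → ℝ} {c : ℝ} (hs : MeasurableSet s) (hμs : μ s ≠ ⊤)
    (hf : ∀ x ∈ s, f x ≤ c) (hfint : IntegrableOn f s μ) :
    ∫ x in s, f x ∂μ ≤ c * μ.real s := by
  rw [mul_comm, ← smul_eq_mul, ← setIntegral_const]
  exact setIntegral_mono_on hfint (integrableOn_const hμs) hs hf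

lemma exp_bounds_of_setIntegral_exp_eq_one {X : Type*} [MeasurableSpace X] {μ : Measure X}
    {s : Set X} {u : X → ℝ} {V : ℝ} {x : X} (hs : MeasurableSet s) (hμs : μ s ≠ ⊤)
    (hosc : ∀ y ∈ s, |u y - u x| ≤ V) (hint : ∫ y in s, Real.exp (u y) ∂μ = 1) :
    Real.exp (-V) / μ.real s ≤ Real.exp (u x) ∧ Real.exp (u x) ≤ Real.exp V / μ.real s := by
  have hexp_int : IntegrableOn (fun y ↦ Real.exp (u y)) s μ :=
    Integrable.of_integral_ne_zero (hint ▸ one_ne_zero)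
  have hlower : Real.exp (u x - V) * μ.real s ≤ 1 :=
    hint ▸ setIntegral_ge_of_const_le_real hs hμs
      (fun y hy ↦ Real.exp_le_exp.mpr (by linarith [(abs_le.mp (hosc y hy)).1])) hexp_int
  have hupper : 1 ≤ Real.exp (u x + V) * μ.real s :=
    hint ▸ setIntegral_le_of_le_const_real hs hμs
      (fun y hy ↦ Real.exp_le_exp.mpr (by linarith [(abs_le.mp (hosc y hy)).2])) hexp_int
  have hm : 0 < μ.real s := pos_of_mul_pos_right (one_pos.trans_le hupper) (Real.exp_pos _).le
  rw [Real.exp_sub] at hlower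
  rw [Real.exp_add] at hupper
  rw [Real.exp_neg, div_le_iff₀ hm, le_div_iff₀ hm]
  constructor
  · rw [inv_le_iff_one_le_mul₀ (Real.exp_pos V)]
    linarith
  · rwa [div_mul_eq_mul_div, div_le_one (Real.exp_pos V)] at hlower

theorem stmt7_general (L V : ℝ) (hL : 0 < L) (hV : 0 ≤ V) (u : ℝ → ℝ)
    (hvar : eVariationOn u (Icc 0 L) ≤ ENNReal.ofReal V)
    (hint : (∫ x in Ioc (0:ℝ) L, Real.exp (u x)) = 1) :
    ∀ x ∈ Icc (0:ℝ) L,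
      Real.exp (-V) / L ≤ Real.exp (u x) ∧ Real.exp (u x) ≤ Real.exp V / L := by
  intro x hx
  have hosc : ∀ y ∈ Ioc (0:ℝ) L, |u y - u x| ≤ V := fun y hy ↦
    abs_sub_le_of_eVariationOn_le hV hvar (Ioc_subset_Icc_self hy) hx
  have h := exp_bounds_of_setIntegral_exp_eq_one measurableSet_Ioc measure_Ioc_lt_top.ne hosc hint
  rwa [Real.volume_real_Ioc_of_le hL.le, sub_zero] at h

/-- Gradient bounds from a variation bound: if `u : ℝ → ℝ` is measurable with pointwise
total variation at most `V` on `[0,L]` and `∫_{(0,L]} exp(u) dx = 1`, then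
`e^{−V}/L ≤ exp(u(x)) ≤ e^{V}/L` for every `x ∈ [0,L]`. -/
theorem stmt7 (L V : ℝ) (hL : 0 < L) (hV : 0 ≤ V) (u : ℝ → ℝ) (hu : Measurable u)
    (hvar : eVariationOn u (Icc 0 L) ≤ ENNReal.ofReal V)
    (hint : (∫ x in Ioc (0:ℝ) L, Real.exp (u x)) = 1) :
    ∀ x ∈ Icc (0:ℝ) L,
      Real.exp (-V) / L ≤ Real.exp (u x) ∧ Real.exp (u x) ≤ Real.exp V / L :=
  stmt7_general L V hL hV u hvar hint
end

section
/- Let L > 0 and let h : ℝ → ℝ be twice continuously differentiable with h'(x) > 0 for all x and h(x + L) = h(x) + 1 for all x. Set Φ₀ := ∫₀^L exp(−(d/dx) log h'(x)) dx. Then for every x ∈ ℝ one has e^{−2Φ₀}/L ≤ h'(x) ≤ e^{2Φ₀}/L. -/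
/-!
The function `g = log h'` is `L`-periodic, so its derivative `G = h''/h'` has mean zero over a
period. The elementary inequality `|t| ≤ t + 2 e^{-t}` then bounds the total variation
`∫₀^L |G|` of `g` over a period by `2Φ₀`, hence the oscillation of `g` on all of `ℝ` as well.
Since `h` gains `1` over a period, the mean value theorem gives a point where `h' = 1/L`, and
exponentiating the oscillation bound around that point gives the claim.
-/

open Real intervalIntegral Function

theorem periodic_deriv_of_map_add_eq_add_const {u : ℝ → ℝ} {L c : ℝ}
    (hu : ∀ x, u (x + L) = u x + c) : Periodic (deriv u) L := fun x => by
  rw [← deriv_comp_add_const, funext hu, deriv_add_const]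

theorem exists_deriv_eq_div_of_map_add_eq_add_const {h : ℝ → ℝ} (hh : Differentiable ℝ h)
    {L c : ℝ} (hL : 0 < L) (hper : ∀ x, h (x + L) = h x + c) : ∃ x₀, deriv h x₀ = c / L := by
  obtain ⟨x₀, -, hx₀⟩ := exists_deriv_eq_slope h hL hh.continuous.continuousOn
    (fun x _ => (hh x).differentiableWithinAt)
  refine ⟨x₀, ?_⟩
  have hL0 : h L = h 0 + c := by simpa using hper 0
  rw [hx₀, hL0, sub_zero, add_sub_cancel_left]

theorem abs_le_add_two_mul_exp_neg (t : ℝ) : |t| ≤ t + 2 * exp (-t) := by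
  rcases le_or_gt 0 t with ht | ht
  · rw [abs_of_nonneg ht]
    linarith [exp_pos (-t)]
  · rw [abs_of_neg ht]
    linarith [add_one_le_exp (-t)]

theorem integral_abs_le_two_mul_integral_exp_neg {G : ℝ → ℝ} (hG : Continuous G) {a b : ℝ}
    (hab : a ≤ b) (hmean : ∫ t in a..b, G t = 0) :
    ∫ t in a..b, |G t| ≤ 2 * ∫ t in a..b, exp (-G t) := by
  have hexp : Continuous fun t => 2 * exp (-G t) := by fun_prop
  calc ∫ t in a..b, |G t| ≤ ∫ t in a..b, (G t + 2 * exp (-G t)) :=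
        integral_mono_on hab (hG.abs.intervalIntegrable a b)
          ((hG.add hexp).intervalIntegrable a b) fun t _ => abs_le_add_two_mul_exp_neg (G t)
    _ = 2 * ∫ t in a..b, exp (-G t) := by
        rw [integral_add (hG.intervalIntegrable a b) (hexp.intervalIntegrable a b), hmean,
          integral_const_mul, zero_add]

section PeriodicC1

variable {g : ℝ → ℝ} {L : ℝ}

theorem Function.Periodic.integral_deriv_eq_zero (hg : ContDiff ℝ 1 g) (hper : Periodic g L)
    (a : ℝ) : ∫ t in a..a + L, deriv g t = 0 := by
  rw [integral_deriv_eq_sub (fun x _ => hg.differentiable one_ne_zero x)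
    ((hg.continuous_deriv le_rfl).intervalIntegrable _ _), hper a, sub_self]

theorem Function.Periodic.abs_sub_le_integral_abs_deriv (hg : ContDiff ℝ 1 g)
    (hper : Periodic g L) (hL : 0 < L) (x y : ℝ) :
    |g x - g y| ≤ ∫ t in (0 : ℝ)..L, |deriv g t| := by
  have hG : Continuous (deriv g) := hg.continuous_deriv le_rfl
  obtain ⟨x', hx', hgx⟩ := hper.exists_mem_Ico hL x y
  have hper' : Periodic (fun t => |deriv g t|) L := fun t => by
    simp only [periodic_deriv_of_map_add_eq_add_const (c := 0) (by simpa using hper) t]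
  calc |g x - g y| = |∫ t in y..x', deriv g t| := by
        rw [hgx, integral_deriv_eq_sub (fun t _ => hg.differentiable one_ne_zero t)
          (hG.intervalIntegrable _ _)]
    _ ≤ ∫ t in y..x', |deriv g t| := abs_integral_le_integral_abs hx'.1
    _ ≤ ∫ t in y..y + L, |deriv g t| :=
        integral_mono_interval le_rfl hx'.1 hx'.2.le
          (Filter.Eventually.of_forall fun t => abs_nonneg _) (hG.abs.intervalIntegrable _ _)
    _ = ∫ t in (0 : ℝ)..L, |deriv g t| := by simpa using hper'.intervalIntegral_add_eq y 0

end PeriodicC1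

theorem exp_neg_mul_le_and_le_exp_mul_of_abs_log_sub_log_le {a b M : ℝ} (ha : 0 < a)
    (hb : 0 < b) (hab : |log a - log b| ≤ M) : exp (-M) * b ≤ a ∧ a ≤ exp M * b := by
  obtain ⟨hlo, hhi⟩ := abs_le.mp hab
  constructor
  · calc exp (-M) * b = exp (-M + log b) := by rw [exp_add, exp_log hb]
      _ ≤ exp (log a) := exp_le_exp.mpr (by linarith)
      _ = a := exp_log ha
  · calc a = exp (log a) := (exp_log ha).symm
      _ ≤ exp (M + log b) := exp_le_exp.mpr (by linarith)
      _ = exp M * b := by rw [exp_add, exp_log hb]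

/-- A priori gradient bounds for smooth monotone periodic height profiles: if `h` is `C²`
with `h' > 0` and `h(x+L) = h(x) + 1`, and `Φ₀ = ∫₀^L exp(−(log h')'(x)) dx`, then
`e^{−2Φ₀}/L ≤ h'(x) ≤ e^{2Φ₀}/L` for every `x`. -/
theorem stmt8 (L : ℝ) (hL : 0 < L) (h : ℝ → ℝ) (hh : ContDiff ℝ 2 h)
    (hpos : ∀ x, 0 < deriv h x) (hper : ∀ x, h (x + L) = h x + 1)
    (Φ₀ : ℝ)
    (hΦ₀ : Φ₀ = ∫ x in (0:ℝ)..L, Real.exp (-(deriv (fun y => Real.log (deriv h y)) x))) :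
    ∀ x : ℝ,
      Real.exp (-(2 * Φ₀)) / L ≤ deriv h x ∧ deriv h x ≤ Real.exp (2 * Φ₀) / L := by
  intro x
  set g : ℝ → ℝ := fun y => log (deriv h y)
  have hg : ContDiff ℝ 1 g := (hh.deriv' (n := 1)).log fun y => (hpos y).ne'
  have hgper : Periodic g L := fun y => by
    simp only [g, periodic_deriv_of_map_add_eq_add_const hper y]
  obtain ⟨x₀, hx₀⟩ := exists_deriv_eq_div_of_map_add_eq_add_const
    (hh.differentiable two_ne_zero) hL hper
  have hosc : |g x - g x₀| ≤ 2 * Φ₀ := by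
    have hmean := hgper.integral_deriv_eq_zero hg 0
    rw [zero_add] at hmean
    rw [hΦ₀]
    exact (hgper.abs_sub_le_integral_abs_deriv hg hL x x₀).trans
      (integral_abs_le_two_mul_integral_exp_neg (hg.continuous_deriv le_rfl) hL.le hmean)
  have hbounds := exp_neg_mul_le_and_le_exp_mul_of_abs_log_sub_log_le (hpos x) (hpos x₀) hosc
  rwa [hx₀, mul_one_div, mul_one_div] at hbounds
end

section
/- Let L > 0. Let u : ℝ → ℝ be four times continuously differentiable with u'(x) > 0 for all x and u(x+L) = u(x) + 1 for all x, and let w : ℝ → ℝ be continuous and L-periodic. Suppose that for every twice continuously differentiable v : ℝ → ℝ with v'(x) > 0 for all x and v(x+L) = v(x) + 1 for all x, one has ∫₀^L w(x)(u(x) − v(x)) dx ≤ ∫₀^L exp(−(d/dx) log v'(x)) dx − ∫₀^L exp(−(d/dx) log u'(x)) dx. Then for every x ∈ ℝ, w(x) = (d/dx)[ (1/u'(x)) · (d/dx) exp(−(d/dx) log u'(x)) ]. -/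
/-!
Write `Φ(v) = ∫₀^L exp (-(log v')')` for the energy. For a smooth `L`-periodic `φ` the profile
`u + e φ` is admissible when `|e|` is small, because `u'` is bounded below by a positive constant;
the variational inequality then says that `e ↦ Φ(u + e φ) + e ∫ w φ` is minimal at `e = 0`.
Differentiating under the integral sign gives `∫ w φ = ∫ exp (-(log u')') (φ'/u')'`, and two
integrations by parts, whose boundary terms cancel by periodicity, turn the right-hand side into
`∫ ((1/u') (exp (-(log u')'))')' φ`. A continuous periodic function orthogonal to every smooth
periodic `φ` vanishes, as one sees by testing with a bump that is a function of
`cos (2π (x - x₀) / L)`.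
-/

open Real MeasureTheory Set Function Topology Metric

theorem periodic_deriv_of_forall_add_eq_add {f : ℝ → ℝ} {c d : ℝ}
    (h : ∀ x, f (x + c) = f x + d) : Periodic (deriv f) c := fun x => by
  rw [← deriv_comp_add_const, show (fun y => f (y + c)) = fun y => f y + d from funext h,
    deriv_add_const]

theorem Function.Periodic.deriv {f : ℝ → ℝ} {c : ℝ} (hf : Periodic f c) :
    Periodic (deriv f) c :=
  periodic_deriv_of_forall_add_eq_add (d := 0) fun x => by rw [hf x, add_zero]

theorem Function.Periodic.exists_pos_forall_le_of_continuous {a : ℝ → ℝ} {c : ℝ}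
    (hp : Periodic a c) (hc : c ≠ 0) (ha : Continuous a) (hpos : ∀ x, 0 < a x) :
    ∃ m > 0, ∀ x, m ≤ a x := by
  obtain ⟨_, ⟨y, rfl⟩, hy⟩ := (hp.compact_of_continuous hc ha).exists_isLeast (range_nonempty a)
  exact ⟨a y, hpos y, fun x => hy ⟨x, rfl⟩⟩

theorem Function.Periodic.exists_forall_abs_le_of_continuous {b : ℝ → ℝ} {c : ℝ}
    (hp : Periodic b c) (hc : c ≠ 0) (hb : Continuous b) :
    ∃ M ≥ 0, ∀ x, |b x| ≤ M := by
  obtain ⟨M, hM⟩ := (hp.isBounded_of_continuous hc hb).exists_norm_le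
  exact ⟨max M 0, le_max_right _ _, fun x => (hM _ ⟨x, rfl⟩).trans (le_max_left _ _)⟩

theorem exists_pos_forall_add_mul_pos {a b : ℝ → ℝ} {c : ℝ} (hc : c ≠ 0)
    (ha : Continuous a) (hap : Periodic a c) (hpos : ∀ x, 0 < a x)
    (hb : Continuous b) (hbp : Periodic b c) :
    ∃ δ > 0, ∀ e, |e| ≤ δ → ∀ x, 0 < a x + e * b x := by
  obtain ⟨m, hm, ham⟩ := hap.exists_pos_forall_le_of_continuous hc ha hpos
  obtain ⟨M, hM, hbM⟩ := hbp.exists_forall_abs_le_of_continuous hc hb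
  refine ⟨m / (M + 1), by positivity, fun e he x => ?_⟩
  have hsmall : |e * b x| < m := calc
    |e * b x| ≤ m / (M + 1) * M := by
      rw [abs_mul]; exact mul_le_mul he (hbM x) (abs_nonneg _) (by positivity)
    _ < m := by rw [div_mul_eq_mul_div, div_lt_iff₀ (by positivity)]; nlinarith
  linarith [neg_abs_le (e * b x), ham x]

theorem intervalIntegral.integral_mul_deriv_eq_neg_of_periodic {f g : ℝ → ℝ} {c : ℝ}
    (hfp : Periodic f c) (hgp : Periodic g c) (hf : ContDiff ℝ 1 f) (hg : ContDiff ℝ 1 g) :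
    ∫ x in 0..c, f x * deriv g x = -∫ x in 0..c, deriv f x * g x := by
  rw [intervalIntegral.integral_mul_deriv_eq_deriv_mul
    (fun x _ => (hf.differentiable one_ne_zero x).hasDerivAt)
    (fun x _ => (hg.differentiable one_ne_zero x).hasDerivAt)
    (hf.continuous_deriv_one.intervalIntegrable _ _)
    (hg.continuous_deriv_one.intervalIntegrable _ _)]
  have hf0 : f c = f 0 := by simpa using hfp 0
  have hg0 : g c = g 0 := by simpa using hgp 0
  rw [hf0, hg0, sub_self, zero_sub]

theorem hasDerivAt_intervalIntegral_of_continuousOn {E : Type*} [NormedAddCommGroup E]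
    [NormedSpace ℝ E] {F F' : ℝ → ℝ → E} {a b e₀ δ : ℝ} (hδ : 0 < δ)
    (hF : ∀ e ∈ ball e₀ δ, ContinuousOn (F e) (uIcc a b))
    (hF' : ContinuousOn (uncurry F') (closedBall e₀ δ ×ˢ uIcc a b))
    (hderiv : ∀ e ∈ ball e₀ δ, ∀ t ∈ uIcc a b, HasDerivAt (F · t) (F' e t) e) :
    HasDerivAt (fun e => ∫ t in a..b, F e t) (∫ t in a..b, F' e₀ t) e₀ := by
  obtain ⟨M, hM⟩ :=
    (isCompact_closedBall e₀ δ |>.prod isCompact_uIcc).exists_bound_of_continuousOn hF'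
  have hball : ball e₀ δ ∈ 𝓝 e₀ := ball_mem_nhds e₀ hδ
  have hF'₀ : ContinuousOn (F' e₀) (uIcc a b) :=
    hF'.comp (continuousOn_const.prodMk continuousOn_id) fun t ht => ⟨mem_closedBall_self hδ.le, ht⟩
  refine (intervalIntegral.hasDerivAt_integral_of_dominated_loc_of_deriv_le (bound := fun _ => M)
    hball ?_ ((hF e₀ (mem_ball_self hδ)).intervalIntegrable) ?_ ?_ intervalIntegrable_const ?_).2
  · filter_upwards [hball] with e he
    exact ((hF e he).mono uIoc_subset_uIcc).aestronglyMeasurable measurableSet_uIoc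
  · exact (hF'₀.mono uIoc_subset_uIcc).aestronglyMeasurable measurableSet_uIoc
  · exact ae_of_all _ fun t ht e he => hM (e, t) ⟨ball_subset_closedBall he, uIoc_subset_uIcc ht⟩
  · exact ae_of_all _ fun t ht e he => hderiv e he t (uIoc_subset_uIcc ht)

theorem exists_periodic_bump {L : ℝ} (hL : 0 < L) (x₀ : ℝ) {r : ℝ} (hr : 0 < r) (hrL : r ≤ L / 2)
    (n : ℕ∞) :
    ∃ φ : ℝ → ℝ, ContDiff ℝ n φ ∧ Periodic φ L ∧ (∀ x, 0 ≤ φ x) ∧ 0 < φ x₀ ∧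
      ∀ x, r ≤ |x - x₀| → |x - x₀| ≤ L / 2 → φ x = 0 := by
  set θ := 2 * π * r / L
  have hθ : 0 < θ := by positivity
  have hθπ : θ ≤ π := by
    rw [div_le_iff₀ hL]; nlinarith [pi_pos]
  refine ⟨fun x => smoothTransition (cos (2 * π * (x - x₀) / L) - cos θ),
    smoothTransition.contDiff.comp (by fun_prop), fun x => ?_, fun x => smoothTransition.nonneg _,
    smoothTransition.pos_of_pos ?_, fun x hr hL2 => smoothTransition.zero_of_nonpos ?_⟩
  · simp only [show 2 * π * (x + L - x₀) / L = 2 * π * (x - x₀) / L + 2 * π by field_simp; ring,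
      cos_add_two_pi]
  · simpa using cos_lt_cos_of_nonneg_of_le_pi le_rfl hθπ hθ
  · rw [sub_nonpos, ← cos_abs, abs_div, abs_mul, abs_of_pos hL, abs_of_pos two_pi_pos]
    refine cos_le_cos_of_nonneg_of_le_pi hθ.le ?_ ?_
    · rw [div_le_iff₀ hL]; nlinarith [pi_pos]
    · exact div_le_div_of_nonneg_right (by gcongr) hL.le

theorem Function.Periodic.exists_integral_mul_pos {g : ℝ → ℝ} {L x₀ : ℝ} (hL : 0 < L)
    (hg : Continuous g) (hgp : Periodic g L) (hx₀ : 0 < g x₀) (n : ℕ∞) :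
    ∃ φ : ℝ → ℝ, ContDiff ℝ n φ ∧ Periodic φ L ∧ 0 < ∫ x in 0..L, g x * φ x := by
  obtain ⟨ε, hε, hgε⟩ :=
    Metric.eventually_nhds_iff.1 (hg.continuousAt.eventually (lt_mem_nhds hx₀))
  obtain ⟨φ, hφ, hφp, hφnn, hφx₀, hφzero⟩ :=
    exists_periodic_bump hL x₀ (lt_min hε (half_pos hL)) (min_le_right ε (L / 2)) n
  refine ⟨φ, hφ, hφp, ?_⟩
  have hshift := (hgp.mul hφp).intervalIntegral_add_eq 0 (x₀ - L / 2)
  simp only [Pi.mul_apply, zero_add] at hshift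
  rw [hshift]
  refine intervalIntegral.integral_pos (by linarith) (hg.mul hφ.continuous).continuousOn
    (fun x hx => ?_) ⟨x₀, ⟨by linarith, by linarith⟩, mul_pos hx₀ hφx₀⟩
  by_cases hx₀r : |x - x₀| < min ε (L / 2)
  · exact mul_nonneg (hgε (lt_of_lt_of_le hx₀r (min_le_left _ _))).le (hφnn x)
  · have hxL : |x - x₀| ≤ L / 2 := abs_le.2 ⟨by linarith [hx.1], by linarith [hx.2]⟩
    simp [hφzero x (not_lt.1 hx₀r) hxL]

theorem Function.Periodic.eq_zero_of_forall_integral_mul_eq_zero {g : ℝ → ℝ} {L : ℝ} (hL : 0 < L)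
    (hg : Continuous g) (hgp : Periodic g L) (n : ℕ∞)
    (h : ∀ φ : ℝ → ℝ, ContDiff ℝ n φ → Periodic φ L → ∫ x in 0..L, g x * φ x = 0) : g = 0 := by
  funext x₀
  by_contra hne
  rcases lt_or_gt_of_ne hne with hneg | hpos
  · obtain ⟨φ, hφ, hφp, hint⟩ :=
      (hgp.comp Neg.neg).exists_integral_mul_pos hL hg.neg (neg_pos.2 hneg) n
    simp [intervalIntegral.integral_neg, h φ hφ hφp] at hint
  · obtain ⟨φ, hφ, hφp, hint⟩ := hgp.exists_integral_mul_pos hL hg hpos n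
    exact hint.ne' (h φ hφ hφp)

theorem Function.Periodic.eq_of_forall_integral_mul_eq {f g : ℝ → ℝ} {L : ℝ} (hL : 0 < L)
    (hf : Continuous f) (hfp : Periodic f L) (hg : Continuous g) (hgp : Periodic g L) (n : ℕ∞)
    (h : ∀ φ : ℝ → ℝ, ContDiff ℝ n φ → Periodic φ L →
      ∫ x in 0..L, f x * φ x = ∫ x in 0..L, g x * φ x) : f = g :=
  sub_eq_zero.1 <| (hfp.sub hgp).eq_zero_of_forall_integral_mul_eq_zero hL (hf.sub hg) n
    fun φ hφ hφp => by
      simp only [Pi.sub_apply, sub_mul]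
      rw [intervalIntegral.integral_sub (f := fun x => f x * φ x) (g := fun x => g x * φ x)
        ((hf.mul hφ.continuous).intervalIntegrable _ _)
        ((hg.mul hφ.continuous).intervalIntegrable _ _), h φ hφ hφp, sub_self]

namespace SolidOnSolid

noncomputable def energyDensity (p : ℝ → ℝ) (x : ℝ) : ℝ := exp (-deriv (fun y => log (p y)) x)

noncomputable def energy (L : ℝ) (v : ℝ → ℝ) : ℝ := ∫ x in 0..L, energyDensity (deriv v) x

theorem energyDensity_eq {p : ℝ → ℝ} {p' x : ℝ} (hp : HasDerivAt p p' x) (hx : p x ≠ 0) :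
    energyDensity p x = exp (-(p' / p x)) := by
  rw [energyDensity, (hp.log hx).deriv]

theorem _root_.ContDiff.energyDensity {p : ℝ → ℝ} {n : ℕ} (hp : ContDiff ℝ (n + 1) p)
    (hp0 : ∀ x, p x ≠ 0) : ContDiff ℝ n (energyDensity p) :=
  (hp.log hp0).deriv'.neg.exp

theorem _root_.Function.Periodic.energyDensity {p : ℝ → ℝ} {c : ℝ} (hp : Periodic p c) :
    Periodic (energyDensity p) c :=
  (hp.comp log).deriv.comp fun t => exp (-t)

theorem hasDerivAt_integral_energyDensity_add_mul {a b : ℝ → ℝ} {s t δ : ℝ}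
    (ha : ContDiff ℝ 1 a) (hb : ContDiff ℝ 1 b) (hδ : 0 < δ)
    (hpos : ∀ e, |e| ≤ δ → ∀ x, 0 < a x + e * b x) :
    HasDerivAt (fun e => ∫ x in s..t, energyDensity (fun y => a y + e * b y) x)
      (-∫ x in s..t, energyDensity a x * deriv (fun y => b y / a y) x) 0 := by
  have hda : ∀ x, HasDerivAt a (deriv a x) x :=
    fun x => (ha.differentiable one_ne_zero x).hasDerivAt
  have hdb : ∀ x, HasDerivAt b (deriv b x) x :=
    fun x => (hb.differentiable one_ne_zero x).hasDerivAt
  set q : ℝ → ℝ → ℝ := fun e x => (deriv a x + e * deriv b x) / (a x + e * b x)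
  set q' : ℝ → ℝ → ℝ := fun e x =>
    (deriv b x * (a x + e * b x) - (deriv a x + e * deriv b x) * b x) / (a x + e * b x) ^ 2
  have hne : ∀ p ∈ closedBall (0 : ℝ) δ ×ˢ uIcc s t, a p.2 + p.1 * b p.2 ≠ 0 := fun p hp =>
    (hpos p.1 (by simpa using hp.1) p.2).ne'
  have hne2 : ∀ p ∈ closedBall (0 : ℝ) δ ×ˢ uIcc s t, (a p.2 + p.1 * b p.2) ^ 2 ≠ 0 :=
    fun p hp => pow_ne_zero 2 (hne p hp)
  have hball : ∀ e ∈ ball (0 : ℝ) δ, |e| ≤ δ := fun e he => (mem_ball_zero_iff.1 he).le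
  have hdens : ∀ e, |e| ≤ δ → energyDensity (fun y => a y + e * b y) = fun x => exp (-q e x) :=
    fun e he => funext fun x =>
      energyDensity_eq ((hda x).add ((hdb x).const_mul e)) (hpos e he x).ne'
  have hq : ∀ e, |e| ≤ δ → ∀ x, HasDerivAt (q · x) (q' e x) e := fun e he x => by
    simpa only [one_mul] using (((hasDerivAt_id' e).mul_const (deriv b x)).const_add
      (deriv a x)).fun_div (((hasDerivAt_id' e).mul_const (b x)).const_add (a x)) (hpos e he x).ne'
  have hca := ha.continuous
  have hcb := hb.continuous
  have hca' := ha.continuous_deriv_one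
  have hcb' := hb.continuous_deriv_one
  have hFcont : ∀ e ∈ ball (0 : ℝ) δ, ContinuousOn (fun x => exp (-q e x)) (uIcc s t) := by
    intro e he
    have hne' : ∀ x, a x + e * b x ≠ 0 := fun x => (hpos e (hball e he) x).ne'
    exact Continuous.continuousOn (by simp only [q]; fun_prop (disch := assumption))
  have hF'cont : ContinuousOn (uncurry fun e x => exp (-q e x) * -q' e x)
      (closedBall 0 δ ×ˢ uIcc s t) := by
    simp only [q, q']
    fun_prop (disch := assumption)
  have ha0 : ∀ x, a x ≠ 0 := fun x => by simpa using (hpos 0 (by simpa using hδ.le) x).ne'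
  refine ((hasDerivAt_intervalIntegral_of_continuousOn hδ hFcont hF'cont
    fun e he x _ => (hq e (hball e he) x).neg.exp).congr_of_eventuallyEq ?_).congr_deriv ?_
  · filter_upwards [ball_mem_nhds (0 : ℝ) hδ] with e he
    rw [hdens e (hball e he)]
  · rw [← intervalIntegral.integral_neg]
    refine intervalIntegral.integral_congr fun x _ => ?_
    rw [energyDensity_eq (hda x) (ha0 x), ((hdb x).fun_div (hda x) (ha0 x)).deriv]
    simp only [q, q', zero_mul, add_zero]
    ring

theorem integral_mul_eq_integral_energyDensity_mul {L : ℝ} (hL : L ≠ 0) {u w φ : ℝ → ℝ}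
    (hu : ContDiff ℝ 2 u) (hupos : ∀ x, 0 < deriv u x) (huper : ∀ x, u (x + L) = u x + 1)
    (hEVI : ∀ v : ℝ → ℝ, ContDiff ℝ 2 v → (∀ x, 0 < deriv v x) → (∀ x, v (x + L) = v x + 1) →
      ∫ x in 0..L, w x * (u x - v x) ≤ energy L v - energy L u)
    (hφ : ContDiff ℝ 2 φ) (hφp : Periodic φ L) :
    ∫ x in 0..L, w x * φ x =
      ∫ x in 0..L, energyDensity (deriv u) x * deriv (fun y => deriv φ y / deriv u y) x := by
  have ha : ContDiff ℝ 1 (deriv u) := hu.deriv'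
  have hb : ContDiff ℝ 1 (deriv φ) := hφ.deriv'
  obtain ⟨δ, hδ, hpos⟩ := exists_pos_forall_add_mul_pos hL ha.continuous
    (periodic_deriv_of_forall_add_eq_add huper) hupos hb.continuous hφp.deriv
  have hderiv : ∀ e, deriv (fun x => u x + e * φ x) = fun y => deriv u y + e * deriv φ y :=
    fun e => funext fun y => ((hu.differentiable two_ne_zero y).hasDerivAt.add
      ((hφ.differentiable two_ne_zero y).hasDerivAt.const_mul e)).deriv
  set ψ := fun e => ∫ x in 0..L, energyDensity (fun y => deriv u y + e * deriv φ y) x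
  set c := ∫ x in 0..L, w x * φ x
  have hmin : IsLocalMin (fun e => ψ e + e * c) 0 := by
    filter_upwards [Metric.closedBall_mem_nhds (0 : ℝ) hδ] with e he
    have hv := hEVI (fun x => u x + e * φ x) (hu.add (contDiff_const.mul hφ))
      (by simpa only [hderiv] using hpos e (by simpa using he))
      (fun x => by simp only [huper x, hφp x]; ring)
    have hlhs : ∫ x in 0..L, w x * (u x - (u x + e * φ x)) = -(e * c) := by
      rw [← intervalIntegral.integral_const_mul, ← intervalIntegral.integral_neg]
      exact intervalIntegral.integral_congr fun x _ => by ring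
    simp only [energy, hderiv, hlhs] at hv
    simp only [ψ, zero_mul, add_zero]
    linarith
  have := hmin.hasDerivAt_eq_zero
    ((hasDerivAt_integral_energyDensity_add_mul ha hb hδ hpos).add (hasDerivAt_mul_const c))
  linarith

end SolidOnSolid

open SolidOnSolid in
/-- An EVI solution is a strong solution (smooth stationary-in-time form): if `u` is a
smooth monotone periodic height profile and `w` a continuous periodic function such that
`∫₀^L w (u − v) dx ≤ φ(v) − φ(u)` for every smooth monotone periodic competitor `v`, where
`φ(v) = ∫₀^L exp(−(log v')') dx`, then `w = ((1/u')(e^{−(log u')'})')'` everywhere. -/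
theorem stmt10 (L : ℝ) (hL : 0 < L) (u : ℝ → ℝ) (hu : ContDiff ℝ 4 u)
    (hupos : ∀ x, 0 < deriv u x) (huper : ∀ x, u (x + L) = u x + 1)
    (w : ℝ → ℝ) (hw : Continuous w) (hwper : ∀ x, w (x + L) = w x)
    (hEVI : ∀ v : ℝ → ℝ, ContDiff ℝ 2 v → (∀ x, 0 < deriv v x) →
      (∀ x, v (x + L) = v x + 1) →
      (∫ x in (0:ℝ)..L, w x * (u x - v x)) ≤
        (∫ x in (0:ℝ)..L, Real.exp (-(deriv (fun y => Real.log (deriv v y)) x))) -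
          ∫ x in (0:ℝ)..L, Real.exp (-(deriv (fun y => Real.log (deriv u y)) x))) :
    ∀ x : ℝ, w x = deriv (fun y => (1 / deriv u y) *
      deriv (fun z => Real.exp (-(deriv (fun s => Real.log (deriv u s)) z))) y) x := by
  have hu1 : ContDiff ℝ 3 (deriv u) := hu.deriv'
  have hu1p : Periodic (deriv u) L := periodic_deriv_of_forall_add_eq_add huper
  have hu1ne : ∀ x, deriv u x ≠ 0 := fun x => (hupos x).ne'
  have hE : ContDiff ℝ 2 (energyDensity (deriv u)) := hu1.energyDensity hu1ne
  have hEp : Periodic (energyDensity (deriv u)) L := hu1p.energyDensity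
  set G := fun y => 1 / deriv u y * deriv (energyDensity (deriv u)) y
  have hG : ContDiff ℝ 1 G := (contDiff_const.div (hu1.of_le (by norm_num)) hu1ne).mul hE.deriv'
  have hGp : Periodic G L := fun x => by simp only [G, hu1p x, hEp.deriv x]
  have hweak : ∀ φ : ℝ → ℝ, ContDiff ℝ 2 φ → Periodic φ L →
      ∫ x in 0..L, w x * φ x = ∫ x in 0..L, deriv G x * φ x := fun φ hφ hφp => calc
    _ = ∫ x in 0..L, energyDensity (deriv u) x * deriv (fun y => deriv φ y / deriv u y) x :=
      integral_mul_eq_integral_energyDensity_mul hL.ne' (hu.of_le (by norm_num)) hupos huper hEVI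
        hφ hφp
    _ = -∫ x in 0..L, deriv (energyDensity (deriv u)) x * (deriv φ x / deriv u x) :=
      intervalIntegral.integral_mul_deriv_eq_neg_of_periodic hEp (hφp.deriv.div hu1p)
        (hE.of_le (by norm_num)) (hφ.deriv'.div (hu1.of_le (by norm_num)) hu1ne)
    _ = -∫ x in 0..L, G x * deriv φ x := by
      congr 1
      exact intervalIntegral.integral_congr fun x _ => by simp only [G]; ring
    _ = ∫ x in 0..L, deriv G x * φ x := by
      rw [intervalIntegral.integral_mul_deriv_eq_neg_of_periodic hGp hφp hG
        (hφ.of_le (by norm_num)), neg_neg]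
  exact congrFun (Periodic.eq_of_forall_integral_mul_eq hL hw hwper hG.continuous_deriv_one
    hGp.deriv 2 hweak)
end

section
/- Let (X, λ) be a finite measure space and let a, b, p, q : X → ℝ be measurable. Assume there are constants 0 < c₁ ≤ c₂ and P, Q, c ≥ 0 such that c₁ ≤ a(x) ≤ c₂, |p(x)| ≤ P, |q(x)| ≤ Q and |b(x) p(x)| ≤ c for all x ∈ X, and that x ↦ exp(−b(x)/a(x)) is integrable with respect to λ. Then there exist ε₀ > 0 and C < ∞ such that for every ε ∈ (0, ε₀), the function x ↦ exp(−(b(x) + ε q(x))/(a(x) + ε p(x))) is integrable with respect to λ and ∫_X exp(−(b + εq)/(a + εp)) dλ ≤ C. -/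
/-!
Writing `b / a - (b + ε q) / (a + ε p) = ε (b p - a q) / (a (a + ε p))`, the numerator is
bounded by `ε (c + c₂ Q)` and, once `ε P ≤ c₁ / 2`, the denominator is at least `c₁² / 2`.
So `exp (-(b + ε q) / (a + ε p)) ≤ exp K · exp (-b / a)` for a constant `K` uniform in `x` and
`ε < ε₀`, and domination by the integrable `exp (-b / a)` gives the claim.
-/

open MeasureTheory

lemma div_sub_perturbed_div_eq {a b p q ε : ℝ} (ha : a ≠ 0) (had : a + ε * p ≠ 0) :
    b / a - (b + ε * q) / (a + ε * p) = ε * (b * p - a * q) / (a * (a + ε * p)) := by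
  rw [div_sub_div _ _ ha had]
  ring

lemma div_sub_perturbed_div_le {a b p q ε m m' M : ℝ} (hm : 0 < m) (hm' : 0 < m')
    (ha : m ≤ a) (had : m' ≤ a + ε * p) (hε : 0 ≤ ε) (hM : |b * p - a * q| ≤ M) :
    b / a - (b + ε * q) / (a + ε * p) ≤ ε * M / (m * m') := by
  rw [div_sub_perturbed_div_eq (by linarith) (by linarith)]
  have hM₀ : 0 ≤ M := (abs_nonneg _).trans hM
  have ha₀ : 0 ≤ a := hm.le.trans ha
  have had₀ : 0 ≤ a + ε * p := hm'.le.trans had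
  calc ε * (b * p - a * q) / (a * (a + ε * p))
      ≤ ε * M / (a * (a + ε * p)) := by
        gcongr
        exact (le_abs_self _).trans hM
    _ ≤ ε * M / (m * m') := by gcongr

lemma div_sub_perturbed_div_le_of_abs_le {a b p q ε ε₀ c₁ c₂ P Q c : ℝ} (hc₁ : 0 < c₁)
    (ha₁ : c₁ ≤ a) (ha₂ : a ≤ c₂) (hp : |p| ≤ P) (hq : |q| ≤ Q) (hbp : |b * p| ≤ c)
    (hε : 0 ≤ ε) (hεε₀ : ε ≤ ε₀) (hε₀ : ε₀ * P ≤ c₁ / 2) :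
    b / a - (b + ε * q) / (a + ε * p) ≤ ε₀ * (c + c₂ * Q) / (c₁ * (c₁ / 2)) := by
  have ha₀ : 0 < a := hc₁.trans_le ha₁
  have hden : c₁ / 2 ≤ a + ε * p := by
    have hP : 0 ≤ P := (abs_nonneg _).trans hp
    have hεP : ε * P ≤ ε₀ * P := by gcongr
    nlinarith [neg_le_of_abs_le hp]
  have hnum : |b * p - a * q| ≤ c + c₂ * Q := by
    calc |b * p - a * q| ≤ |b * p| + |a| * |q| := by
          rw [← abs_mul]; exact abs_sub _ _
      _ ≤ c + c₂ * Q := by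
        rw [abs_of_pos ha₀]
        gcongr
        exact ha₀.le.trans ha₂
  calc _ ≤ ε * (c + c₂ * Q) / (c₁ * (c₁ / 2)) :=
        div_sub_perturbed_div_le hc₁ (by positivity) ha₁ hden hε hnum
    _ ≤ ε₀ * (c + c₂ * Q) / (c₁ * (c₁ / 2)) := by
        gcongr
        exact (abs_nonneg _).trans hnum

lemma MeasureTheory.Integrable.and_integral_le_const_mul {X : Type*} [MeasurableSpace X]
    {μ : Measure X} {f g : X → ℝ} {K : ℝ} (hf : Integrable f μ) (hg : AEStronglyMeasurable g μ)
    (hg₀ : ∀ x, 0 ≤ g x) (hgf : ∀ x, g x ≤ K * f x) :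
    Integrable g μ ∧ ∫ x, g x ∂μ ≤ K * ∫ x, f x ∂μ := by
  have hg_int : Integrable g μ :=
    (hf.const_mul K).mono' hg (.of_forall fun x => by
      rw [Real.norm_of_nonneg (hg₀ x)]
      exact hgf x)
  refine ⟨hg_int, ?_⟩
  rw [← integral_const_mul]
  exact integral_mono hg_int (hf.const_mul K) hgf

theorem stmt12_general {X : Type*} [MeasurableSpace X] (lam : Measure X)
    (a b p q : X → ℝ) (ha : Measurable a) (hb : Measurable b) (hp : Measurable p)
    (hq : Measurable q)
    (c₁ c₂ P Q c : ℝ) (hc₁ : 0 < c₁)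
    (hP : 0 ≤ P)
    (hab : ∀ x, c₁ ≤ a x ∧ a x ≤ c₂) (hpb : ∀ x, |p x| ≤ P) (hqb : ∀ x, |q x| ≤ Q)
    (hbp : ∀ x, |b x * p x| ≤ c)
    (hint : Integrable (fun x => Real.exp (-(b x / a x))) lam) :
    ∃ ε₀ > (0 : ℝ), ∃ C : ℝ, ∀ ε : ℝ, 0 < ε → ε < ε₀ →
      Integrable (fun x => Real.exp (-((b x + ε * q x) / (a x + ε * p x)))) lam ∧
      (∫ x, Real.exp (-((b x + ε * q x) / (a x + ε * p x))) ∂lam) ≤ C := by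
  set ε₀ := c₁ / (2 * (P + 1))
  set K := ε₀ * (c + c₂ * Q) / (c₁ * (c₁ / 2))
  have hε₀P : ε₀ * P ≤ c₁ / 2 :=
    calc ε₀ * P ≤ ε₀ * (P + 1) := by gcongr; linarith
      _ = c₁ / 2 := by simp only [ε₀]; field_simp
  refine ⟨ε₀, by positivity, Real.exp K * ∫ x, Real.exp (-(b x / a x)) ∂lam,
    fun ε hε hεε₀ => hint.and_integral_le_const_mul
      (by fun_prop : Measurable _).aestronglyMeasurable (fun x => (Real.exp_pos _).le)
      fun x => ?_⟩
  have hgap : b x / a x - (b x + ε * q x) / (a x + ε * p x) ≤ K :=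
    div_sub_perturbed_div_le_of_abs_le hc₁ (hab x).1 (hab x).2 (hpb x) (hqb x) (hbp x)
      hε.le hεε₀.le hε₀P
  rw [← Real.exp_add]
  exact Real.exp_le_exp.2 (by linarith)

/-- Uniform integrability estimate for the perturbed energy density: under pointwise
bounds `c₁ ≤ a ≤ c₂`, `|p| ≤ P`, `|q| ≤ Q`, `|bp| ≤ c` and integrability of
`exp(−b/a)`, there exist `ε₀ > 0` and a finite constant `C` such that for every
`ε ∈ (0, ε₀)` the function `exp(−(b+εq)/(a+εp))` is integrable with integral at most `C`. -/
theorem stmt12 {X : Type*} [MeasurableSpace X] (lam : Measure X) [IsFiniteMeasure lam]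
    (a b p q : X → ℝ) (ha : Measurable a) (hb : Measurable b) (hp : Measurable p)
    (hq : Measurable q)
    (c₁ c₂ P Q c : ℝ) (hc₁ : 0 < c₁) (hc₁₂ : c₁ ≤ c₂)
    (hP : 0 ≤ P) (hQ : 0 ≤ Q) (hc : 0 ≤ c)
    (hab : ∀ x, c₁ ≤ a x ∧ a x ≤ c₂) (hpb : ∀ x, |p x| ≤ P) (hqb : ∀ x, |q x| ≤ Q)
    (hbp : ∀ x, |b x * p x| ≤ c)
    (hint : Integrable (fun x => Real.exp (-(b x / a x))) lam) :
    ∃ ε₀ > (0 : ℝ), ∃ C : ℝ, ∀ ε : ℝ, 0 < ε → ε < ε₀ →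
      Integrable (fun x => Real.exp (-((b x + ε * q x) / (a x + ε * p x)))) lam ∧
      (∫ x, Real.exp (-((b x + ε * q x) / (a x + ε * p x))) ∂lam) ≤ C :=
  stmt12_general lam a b p q ha hb hp hq c₁ c₂ P Q c hc₁ hP hab hpb hqb hbp hint
end

section
/- Let (X, λ) be a finite measure space and let a, b, p, q : X → ℝ be measurable. Assume there are constants 0 < c₁ ≤ c₂ and P, Q, c ≥ 0 such that c₁ ≤ a(x) ≤ c₂, |p(x)| ≤ P, |q(x)| ≤ Q and |b(x) p(x)| ≤ c for all x ∈ X, and that x ↦ exp(−b(x)/a(x)) is integrable with respect to λ. Then the function x ↦ exp(−b(x)/a(x)) · (−q(x)/a(x) + b(x) p(x)/a(x)²) is integrable, and as ε → 0⁺, (1/ε)[ ∫_X exp(−(b + εq)/(a + εp)) dλ − ∫_X exp(−b/a) dλ ] → ∫_X exp(−b/a) · (−q/a + b p/a²) dλ. -/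
/-!
Write `u ε = (b + ε q)/(a + ε p)`. Its ε-derivative is `(a q - b p)/(a + ε p)²`, and
`u ε = b/a - ε (b p - a q)/(a (a + ε p))`. Since `a ≥ c₁ > 0` and `p`, `b p - a q` are bounded,
for small `|ε|` the denominator stays above `c₁/2`, so `exp (-u ε) ≤ C · exp (-b/a)` and the
ε-derivative of the integrand is dominated by a constant multiple of the integrable function
`exp (-b/a)`. Differentiation under the integral sign then gives the derivative at `ε = 0`,
and the claimed limit is its right-hand difference quotient.
-/

open MeasureTheory Filter Topology

theorem hasDerivAt_div_add_mul {𝕜 : Type*} [NontriviallyNormedField 𝕜] {a b p q ε : 𝕜}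
    (hε : a + ε * p ≠ 0) :
    HasDerivAt (fun t => (b + t * q) / (a + t * p)) ((a * q - b * p) / (a + ε * p) ^ 2) ε := by
  have hnum : HasDerivAt (fun t => b + t * q) q ε := by
    simpa using (hasDerivAt_mul_const q).const_add b
  have hden : HasDerivAt (fun t => a + t * p) p ε := by
    simpa using (hasDerivAt_mul_const p).const_add a
  exact (hnum.div hden hε).congr_deriv (by ring)

theorem half_le_add_mul_of_abs_lt {a p ε c₁ P : ℝ} (ha : c₁ ≤ a) (hp : |p| ≤ P)
    (hε : |ε| < c₁ / (2 * (|P| + 1))) :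
    c₁ / 2 ≤ a + ε * p := by
  have hεp : |ε * p| ≤ c₁ / 2 :=
    calc |ε * p| = |ε| * |p| := abs_mul ε p
      _ ≤ c₁ / (2 * (|P| + 1)) * (|P| + 1) := by
        gcongr
        · exact (abs_nonneg ε).trans hε.le
        · exact hp.trans ((le_abs_self P).trans (le_add_of_nonneg_right zero_le_one))
      _ = c₁ / 2 := by field_simp
  linarith [neg_abs_le (ε * p)]

theorem neg_div_add_mul_sub_neg_div {K : Type*} [Field K] {a b p q ε : K} (ha : a ≠ 0)
    (hε : a + ε * p ≠ 0) :
    -((b + ε * q) / (a + ε * p)) - -(b / a) = ε * (b * p - a * q) / (a * (a + ε * p)) := by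
  field_simp
  ring

theorem exp_neg_div_add_mul_le {a b p q ε c₁ K : ℝ} (hc₁ : 0 < c₁) (ha : c₁ ≤ a)
    (hε : c₁ / 2 ≤ a + ε * p) (hK : |b * p - a * q| ≤ K) :
    Real.exp (-((b + ε * q) / (a + ε * p))) ≤
      Real.exp (2 * |ε| * K / c₁ ^ 2) * Real.exp (-(b / a)) := by
  have ha₀ : 0 < a := hc₁.trans_le ha
  have hε₀ : 0 < a + ε * p := by linarith
  have hK₀ : 0 ≤ K := (abs_nonneg _).trans hK
  rw [← Real.exp_add, Real.exp_le_exp, ← sub_le_iff_le_add,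
    neg_div_add_mul_sub_neg_div ha₀.ne' hε₀.ne']
  calc ε * (b * p - a * q) / (a * (a + ε * p))
      ≤ |ε * (b * p - a * q)| / (a * (a + ε * p)) := by gcongr; exact le_abs_self _
    _ ≤ |ε| * K / (c₁ * (c₁ / 2)) := by
        rw [abs_mul]
        gcongr
    _ = 2 * |ε| * K / c₁ ^ 2 := by field_simp

section Integral

variable {X : Type*} [MeasurableSpace X] {μ : Measure X} {a b p q : X → ℝ} {c₁ P K : ℝ}

theorem hasDerivAt_integral_exp_neg_div_add_mul (ha : Measurable a) (hb : Measurable b)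
    (hp : Measurable p) (hq : Measurable q) (hc₁ : 0 < c₁) (ha_ge : ∀ x, c₁ ≤ a x)
    (hp_le : ∀ x, |p x| ≤ P) (hK : ∀ x, |b x * p x - a x * q x| ≤ K)
    (hint : Integrable (fun x => Real.exp (-(b x / a x))) μ) :
    Integrable (fun x => Real.exp (-(b x / a x)) * ((b x * p x - a x * q x) / a x ^ 2)) μ ∧
    HasDerivAt (fun ε => ∫ x, Real.exp (-((b x + ε * q x) / (a x + ε * p x))) ∂μ)
      (∫ x, Real.exp (-(b x / a x)) * ((b x * p x - a x * q x) / a x ^ 2) ∂μ) 0 := by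
  set δ := c₁ / (2 * (|P| + 1))
  have hδ : 0 < δ := by positivity
  set F' : ℝ → X → ℝ := fun ε x => Real.exp (-((b x + ε * q x) / (a x + ε * p x))) *
    ((b x * p x - a x * q x) / (a x + ε * p x) ^ 2)
  have hden : ∀ x, ∀ ε ∈ Metric.ball (0 : ℝ) δ, c₁ / 2 ≤ a x + ε * p x := fun x ε hε =>
    half_le_add_mul_of_abs_lt (ha_ge x) (hp_le x) (by simpa using hε)
  have hF_meas (ε : ℝ) : AEStronglyMeasurable
      (fun x => Real.exp (-((b x + ε * q x) / (a x + ε * p x)))) μ :=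
    (by fun_prop : Measurable _).aestronglyMeasurable
  have hF'_meas : AEStronglyMeasurable (F' 0) μ :=
    (by fun_prop : Measurable _).aestronglyMeasurable
  have h_bound : ∀ x, ∀ ε ∈ Metric.ball (0 : ℝ) δ,
      ‖F' ε x‖ ≤ Real.exp (2 * δ * K / c₁ ^ 2) * (K / (c₁ / 2) ^ 2) *
        Real.exp (-(b x / a x)) := by
    intro x ε hε
    have hεδ : |ε| ≤ δ := by simpa using (Metric.mem_ball.1 hε).le
    have hK₀ : 0 ≤ K := (abs_nonneg _).trans (hK x)
    have hden₀ : 0 < a x + ε * p x := by linarith [hden x ε hε]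
    have hexp := exp_neg_div_add_mul_le hc₁ (ha_ge x) (hden x ε hε) (hK x)
    calc ‖F' ε x‖ = Real.exp (-((b x + ε * q x) / (a x + ε * p x))) *
          (|b x * p x - a x * q x| / (a x + ε * p x) ^ 2) := by
          simp [F', abs_of_pos hden₀]
      _ ≤ Real.exp (2 * δ * K / c₁ ^ 2) * Real.exp (-(b x / a x)) * (K / (c₁ / 2) ^ 2) := by
          gcongr
          · exact hexp.trans (by gcongr)
          · exact hK x
          · exact hden x ε hε
      _ = _ := by ring
  have h_diff : ∀ x, ∀ ε ∈ Metric.ball (0 : ℝ) δ,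
      HasDerivAt (fun t => Real.exp (-((b x + t * q x) / (a x + t * p x)))) (F' ε x) ε := by
    intro x ε hε
    have hden₀ : a x + ε * p x ≠ 0 := by linarith [hden x ε hε]
    exact (hasDerivAt_div_add_mul (b := b x) (q := q x) hden₀).neg.exp.congr_deriv
      (by simp only [F', Pi.neg_apply]; ring)
  have hF'_zero :
      F' 0 = fun x => Real.exp (-(b x / a x)) * ((b x * p x - a x * q x) / a x ^ 2) := by
    funext x
    simp only [F', zero_mul, add_zero]
  rw [← hF'_zero]
  exact hasDerivAt_integral_of_dominated_loc_of_deriv_le (Metric.ball_mem_nhds 0 hδ)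
    (Eventually.of_forall hF_meas) (by simpa using hint) hF'_meas
    (Eventually.of_forall h_bound) (hint.const_mul _) (Eventually.of_forall h_diff)

end Integral

theorem stmt13_general {X : Type*} [MeasurableSpace X] (lam : Measure X)
    (a b p q : X → ℝ) (ha : Measurable a) (hb : Measurable b) (hp : Measurable p)
    (hq : Measurable q)
    (c₁ c₂ P Q c : ℝ) (hc₁ : 0 < c₁)
    (hab : ∀ x, c₁ ≤ a x ∧ a x ≤ c₂) (hpb : ∀ x, |p x| ≤ P) (hqb : ∀ x, |q x| ≤ Q)
    (hbp : ∀ x, |b x * p x| ≤ c)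
    (hint : Integrable (fun x => Real.exp (-(b x / a x))) lam) :
    Integrable
      (fun x => Real.exp (-(b x / a x)) * (-(q x / a x) + b x * p x / (a x) ^ 2)) lam ∧
    Tendsto
      (fun ε : ℝ => (1 / ε) *
        ((∫ x, Real.exp (-((b x + ε * q x) / (a x + ε * p x))) ∂lam) -
          ∫ x, Real.exp (-(b x / a x)) ∂lam))
      (𝓝[>] 0)
      (𝓝 (∫ x, Real.exp (-(b x / a x)) * (-(q x / a x) + b x * p x / (a x) ^ 2) ∂lam)) := by
  have ha_pos (x : X) : 0 < a x := hc₁.trans_le (hab x).1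
  have hK (x : X) : |b x * p x - a x * q x| ≤ c + c₂ * Q :=
    calc |b x * p x - a x * q x| ≤ |b x * p x| + |a x| * |q x| := by
          rw [← abs_mul]; exact abs_sub _ _
      _ ≤ c + c₂ * Q := by
          rw [abs_of_pos (ha_pos x)]
          gcongr
          exacts [hbp x, ((ha_pos x).trans_le (hab x).2).le, (hab x).2, hqb x]
  have hintegrand : (fun x => Real.exp (-(b x / a x)) * (-(q x / a x) + b x * p x / a x ^ 2)) =
      fun x => Real.exp (-(b x / a x)) * ((b x * p x - a x * q x) / a x ^ 2) := by
    funext x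
    field_simp [(ha_pos x).ne']
    ring
  obtain ⟨hint', hderiv⟩ := hasDerivAt_integral_exp_neg_div_add_mul ha hb hp hq hc₁
    (fun x => (hab x).1) hpb hK hint
  rw [hintegrand]
  refine ⟨hint', hderiv.tendsto_slope_zero_right.congr fun ε => ?_⟩
  simp [one_div]

/-- Gâteaux-derivative limit for the perturbed energy: under pointwise bounds
`c₁ ≤ a ≤ c₂`, `|p| ≤ P`, `|q| ≤ Q`, `|bp| ≤ c` and integrability of `exp(−b/a)`, the
function `exp(−b/a)(−q/a + bp/a²)` is integrable and
`(1/ε)[∫ exp(−(b+εq)/(a+εp)) dλ − ∫ exp(−b/a) dλ] → ∫ exp(−b/a)(−q/a + bp/a²) dλ`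
as `ε → 0⁺`. -/
theorem stmt13 {X : Type*} [MeasurableSpace X] (lam : Measure X) [IsFiniteMeasure lam]
    (a b p q : X → ℝ) (ha : Measurable a) (hb : Measurable b) (hp : Measurable p)
    (hq : Measurable q)
    (c₁ c₂ P Q c : ℝ) (hc₁ : 0 < c₁) (hc₁₂ : c₁ ≤ c₂)
    (hP : 0 ≤ P) (hQ : 0 ≤ Q) (hc : 0 ≤ c)
    (hab : ∀ x, c₁ ≤ a x ∧ a x ≤ c₂) (hpb : ∀ x, |p x| ≤ P) (hqb : ∀ x, |q x| ≤ Q)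
    (hbp : ∀ x, |b x * p x| ≤ c)
    (hint : Integrable (fun x => Real.exp (-(b x / a x))) lam) :
    Integrable
      (fun x => Real.exp (-(b x / a x)) * (-(q x / a x) + b x * p x / (a x) ^ 2)) lam ∧
    Tendsto
      (fun ε : ℝ => (1 / ε) *
        ((∫ x, Real.exp (-((b x + ε * q x) / (a x + ε * p x))) ∂lam) -
          ∫ x, Real.exp (-(b x / a x)) ∂lam))
      (𝓝[>] 0)
      (𝓝 (∫ x, Real.exp (-(b x / a x)) * (-(q x / a x) + b x * p x / (a x) ^ 2) ∂lam)) :=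
  stmt13_general lam a b p q ha hb hp hq c₁ c₂ P Q c hc₁ hab hpb hqb hbp hint
end
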